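/- Let n be a positive integer, fix real numbers α ≠ 0, β, γ, η, and let b a^i and b a^j (i ≠ j in Z_n) be two distinct reflections of the dihedral group D_n. Then the vector X ∈ ℝ^{D_n} with X_{b a^i} = 1, X_{b a^j} = −1 and all other coordinates 0 satisfies U(P(D_n))·X = (β + γ)·X; in particular β + γ is an eigenvalue of U(P(D_n)) of multiplicity at least n − 1. -/

import Mathlib

open Matrix

/-- The (undirected) power graph of a group: distinct `u`, `v` are adjacent
iff one is an integer power of the other. -/
def powerGraph (G : Type*) [Group G] : SimpleGraph G where
  Adj u v := u ≠ v ∧ ∃ m : ℤ, u = v ^ m ∨ v = u ^ m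
  symm := ⟨by
    rintro u v ⟨huv, m, hm | hm⟩
    · exact ⟨huv.symm, m, Or.inr hm⟩
    · exact ⟨huv.symm, m, Or.inl hm⟩⟩
  loopless := ⟨fun u h => h.1 rfl⟩

/-- The universal adjacency matrix `U(G) = α A + β D + γ I + η J` of a finite graph. -/
noncomputable def univAdj {V : Type*} [Fintype V] (G : SimpleGraph V)
    (α β γ η : ℝ) : Matrix V V ℝ :=
  letI := Classical.decEq V
  letI : DecidableRel G.Adj := Classical.decRel _
  α • G.adjMatrix ℝ + β • Matrix.diagonal (fun v => (G.degree v : ℝ))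
    + γ • (1 : Matrix V V ℝ) + η • Matrix.of (fun _ _ => (1 : ℝ))

/-! Every reflection `sr k` of `D_n` has order two and is a power of no other element, so in the
power graph it is a pendant vertex hanging off the identity. Two reflections are therefore twins
of degree one: the difference of their indicator vectors is annihilated by `A` (equal columns)
and by `J` (coordinate sum zero), and is fixed by `D`, so `U` scales it by `β + γ`. -/

theorem univAdj_eq {V : Type*} [Fintype V] [DecidableEq V] (G : SimpleGraph V)
    [DecidableRel G.Adj] (α β γ η : ℝ) :
    univAdj G α β γ η = α • G.adjMatrix ℝ + β • diagonal (fun v => (G.degree v : ℝ))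
      + γ • (1 : Matrix V V ℝ) + η • Matrix.of (fun _ _ => (1 : ℝ)) := by
  unfold univAdj
  convert rfl

theorem univAdj_mulVec_single_sub_single {V : Type*} [Fintype V] [DecidableEq V]
    (G : SimpleGraph V) [DecidableRel G.Adj] {u v : V}
    (h : G.neighborSet u = G.neighborSet v) (α β γ η : ℝ) :
    univAdj G α β γ η *ᵥ (Pi.single u 1 - Pi.single v 1) =
      (β * G.degree u + γ) • (Pi.single u 1 - Pi.single v 1) := by
  set x : V → ℝ := Pi.single u 1 - Pi.single v 1
  have hadj (w : V) : G.Adj w u ↔ G.Adj w v := by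
    simpa only [G.adj_comm w, SimpleGraph.mem_neighborSet] using Set.ext_iff.mp h w
  have hdeg : G.degree u = G.degree v := by
    simp only [← G.card_neighborSet_eq_degree, h]
  have hA : G.adjMatrix ℝ *ᵥ x = 0 := by
    ext w
    simp [x, hadj]
  have hD : diagonal (fun v => (G.degree v : ℝ)) *ᵥ x = (G.degree u : ℝ) • x := by
    ext w
    by_cases hw : w = u
    · subst hw; simp [x, mulVec_diagonal]
    · by_cases hw' : w = v <;> simp [x, mulVec_diagonal, hw, hw', hdeg]
  have hJ : (Matrix.of (fun _ _ => (1 : ℝ)) : Matrix V V ℝ) *ᵥ x = 0 := by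
    ext w
    simp [x, mulVec, dotProduct]
  rw [univAdj_eq, add_mulVec, add_mulVec, add_mulVec, smul_mulVec, smul_mulVec, smul_mulVec,
    smul_mulVec, hA, hD, hJ, one_mulVec]
  module

theorem zpow_eq_one_or_self_of_sq_eq_one {G : Type*} [Group G] {x : G} (hx : x ^ 2 = 1)
    (m : ℤ) : x ^ m = 1 ∨ x ^ m = x := by
  obtain ⟨k, rfl | rfl⟩ := Int.even_or_odd' m
  · left; rw [_root_.zpow_mul, zpow_ofNat, hx, _root_.one_zpow]
  · right; rw [_root_.zpow_add_one, _root_.zpow_mul, zpow_ofNat, hx, _root_.one_zpow, one_mul]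

namespace DihedralGroup

variable {n : ℕ}

theorem sr_zpow_eq_one_or_self (k : ZMod n) (m : ℤ) : sr k ^ m = 1 ∨ sr k ^ m = sr k :=
  zpow_eq_one_or_self_of_sq_eq_one (by rw [sq, sr_mul_self]) m

theorem powerGraph_adj_sr_iff {g : DihedralGroup n} {k : ZMod n} :
    (powerGraph (DihedralGroup n)).Adj g (sr k) ↔ g = 1 := by
  constructor
  · rintro ⟨hne, m, hm | hm⟩
    · rcases sr_zpow_eq_one_or_self k m with h | h
      · exact hm.trans h
      · exact absurd (hm.trans h) hne
    · cases g with
      | r l => simp [r_zpow] at hm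
      | sr l =>
        rcases sr_zpow_eq_one_or_self l m with h | h
        · rw [h, one_def] at hm; cases hm
        · exact absurd (hm.trans h).symm hne
  · rintro rfl
    refine ⟨fun h => ?_, 2, Or.inl (by rw [zpow_two, sr_mul_self])⟩
    rw [one_def] at h; cases h

theorem neighborSet_powerGraph_sr (k : ZMod n) :
    (powerGraph (DihedralGroup n)).neighborSet (sr k) = {1} := by
  ext g
  rw [SimpleGraph.mem_neighborSet, SimpleGraph.adj_comm, powerGraph_adj_sr_iff,
    Set.mem_singleton_iff]

theorem degree_powerGraph_sr [NeZero n] [DecidableRel (powerGraph (DihedralGroup n)).Adj]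
    (k : ZMod n) :
    (powerGraph (DihedralGroup n)).degree (sr k) = 1 := by
  simp [← SimpleGraph.card_neighborSet_eq_degree, neighborSet_powerGraph_sr]

end DihedralGroup

theorem ite_eq_single_sub_single {α R : Type*} [DecidableEq α] [Ring R] {u v : α} (h : u ≠ v) :
    (fun g => if g = u then (1 : R) else if g = v then -1 else 0) =
      Pi.single u 1 - Pi.single v 1 := by
  ext g
  simp only [Pi.sub_apply, Pi.single_apply]
  split_ifs <;> simp_all

open DihedralGroup in
theorem univAdj_powerGraph_dihedral_reflection_eigen_general (n : ℕ) [NeZero n]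
    (i j : ZMod n) (hij : i ≠ j) (α β γ η : ℝ) :
    (univAdj (powerGraph (DihedralGroup n)) α β γ η).mulVec
        (fun g => if g = DihedralGroup.sr i then 1
          else if g = DihedralGroup.sr j then -1 else 0) =
      (β + γ) •
      ((fun g => if g = DihedralGroup.sr i then 1
          else if g = DihedralGroup.sr j then -1 else 0) : DihedralGroup n → ℝ) := by
  classical
  have hsr : (sr i : DihedralGroup n) ≠ sr j := fun h => hij (sr.inj h)
  have htwin : (powerGraph (DihedralGroup n)).neighborSet (sr i) =
      (powerGraph (DihedralGroup n)).neighborSet (sr j) := by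
    rw [neighborSet_powerGraph_sr, neighborSet_powerGraph_sr]
  rw [ite_eq_single_sub_single hsr, univAdj_mulVec_single_sub_single _ htwin,
    degree_powerGraph_sr, Nat.cast_one, mul_one]

/-- For two distinct reflections `b a^i`, `b a^j` of the dihedral group
`D_n`, the vector with value `1` at `b a^i`, `-1` at `b a^j` and `0` elsewhere is an
eigenvector of `U(P(D_n))` with eigenvalue `β + γ`. -/
theorem univAdj_powerGraph_dihedral_reflection_eigen (n : ℕ) [NeZero n]
    (i j : ZMod n) (hij : i ≠ j) (α β γ η : ℝ) (hα : α ≠ 0) :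
    (univAdj (powerGraph (DihedralGroup n)) α β γ η).mulVec
        (fun g => if g = DihedralGroup.sr i then 1
          else if g = DihedralGroup.sr j then -1 else 0) =
      (β + γ) •
      ((fun g => if g = DihedralGroup.sr i then 1
          else if g = DihedralGroup.sr j then -1 else 0) : DihedralGroup n → ℝ) :=
  univAdj_powerGraph_dihedral_reflection_eigen_general n i j hij α β γ η
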